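/- arXiv:1205.0087 — 11 statements merged into one kernel-verified Lean document; each statement's English description precedes it below -/
import Mathlib

section
/- Let G be a finite group whose commutator subgroup [G,G] is cyclic, and suppose G is generated by two elements a and b. Then [G,G] is generated by the single commutator [a,b]. -/
/-!
Automorphisms of a cyclic group are power maps, so every subgroup of a cyclic group is
characteristic; hence `⟨c⟩ ≤ [G, G]`, with `c = a⁻¹b⁻¹ab`, is normal in `G`. Modulo `⟨c⟩` the
generators `a` and `b` commute, so the quotient is abelian and `[G, G] ≤ ⟨c⟩`.
-/

open Subgroup
open scoped commutatorElement

theorem Subgroup.characteristic_of_isCyclic {C : Type*} [Group C] [IsCyclic C] (H : Subgroup C) :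
    H.Characteristic := by
  refine characteristic_iff_map_le.mpr fun ϕ ↦ ?_
  obtain ⟨m, hm⟩ := ϕ.toMonoidHom.map_cyclic
  rintro _ ⟨h, hh, rfl⟩
  rw [hm]
  exact zpow_mem hh m

theorem Subgroup.normal_of_le_of_isCyclic {G : Type*} [Group G] {N K : Subgroup G} [N.Normal]
    [IsCyclic N] (hKN : K ≤ N) : K.Normal := by
  have := (K.subgroupOf N).characteristic_of_isCyclic
  rw [← map_subgroupOf_eq_of_le hKN]
  infer_instance

theorem commutator_le_of_closure_eq_top {G : Type*} [Group G] {s : Set G} (hs : closure s = ⊤)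
    {N : Subgroup G} [N.Normal] (h : ∀ x ∈ s, ∀ y ∈ s, ⁅x, y⁆ ∈ N) : commutator G ≤ N := by
  refine Subgroup.Normal.quotient_commutative_iff_commutator_le.mp ⟨⟨fun x y ↦ ?_⟩⟩
  set π := QuotientGroup.mk' N
  have hcomm : ∀ x ∈ π '' s, ∀ y ∈ π '' s, x * y = y * x := by
    rintro _ ⟨x, hx, rfl⟩ _ ⟨y, hy, rfl⟩
    rw [← commutatorElement_eq_one_iff_mul_comm, ← map_commutatorElement,
      QuotientGroup.mk'_apply, QuotientGroup.eq_one_iff]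
    exact h x hx y hy
  have htop : closure (π '' s) = ⊤ := by
    rw [← MonoidHom.map_closure, hs, map_top_of_surjective _ (QuotientGroup.mk'_surjective N)]
  have hle := closure_le_centralizer_centralizer (π '' s)
  rw [htop] at hle
  exact Set.centralizer_centralizer_comm_of_comm hcomm x (hle trivial) y (hle trivial)

theorem commutator_le_of_closure_pair_eq_top {G : Type*} [Group G] {a b : G}
    (hab : closure {a, b} = ⊤) {N : Subgroup G} [N.Normal] (h : ⁅a, b⁆ ∈ N) :
    commutator G ≤ N := by
  refine commutator_le_of_closure_eq_top hab ?_
  have hba : ⁅b, a⁆ ∈ N := commutatorElement_inv a b ▸ inv_mem h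
  rintro x (rfl | rfl) y (rfl | rfl) <;> simp_all [commutatorElement_self]

theorem stmt_0_general {G : Type*} [Group G]
    (hcyc : IsCyclic (commutator G)) (a b : G)
    (hgen : Subgroup.closure ({a, b} : Set G) = ⊤) :
    commutator G = Subgroup.closure {a⁻¹ * b⁻¹ * a * b} := by
  set c := a⁻¹ * b⁻¹ * a * b
  have hc : c ∈ commutator G := by
    have : c = ⁅a⁻¹, b⁻¹⁆ := by simp [c, commutatorElement_def]
    exact this ▸ commutator_mem_commutator (mem_top _) (mem_top _)
  have hle : closure {c} ≤ commutator G := closure_le _ |>.mpr (Set.singleton_subset_iff.mpr hc)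
  have hnormal := normal_of_le_of_isCyclic hle
  refine le_antisymm (commutator_le_of_closure_pair_eq_top hgen ?_) hle
  have hconj : ⁅a, b⁆ = b * a * c * (b * a)⁻¹ := by simp only [c, commutatorElement_def]; group
  rw [hconj]
  exact hnormal.conj_mem c (subset_closure rfl) (b * a)

/-- If `G` is a finite group with cyclic commutator subgroup, generated by two
elements `a` and `b`, then the commutator subgroup is generated by `[a,b] = a⁻¹b⁻¹ab`. -/
theorem stmt_0 {G : Type*} [Group G] [Finite G]
    (hcyc : IsCyclic (commutator G)) (a b : G)
    (hgen : Subgroup.closure ({a, b} : Set G) = ⊤) :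
    commutator G = Subgroup.closure {a⁻¹ * b⁻¹ * a * b} :=
  stmt_0_general hcyc a b hgen
end

section
/- Suppose G is a finite group generated by two elements a, b, the commutator subgroup G' = [G,G] is cyclic of square-free order, and G' is contained in the center Z(G). Then the order of [a,b] divides both the order of the image of a in G/G' and the index of ⟨aG'⟩ in G/G'. -/
/-!
When `G' ≤ Z(G)`, the commutator is multiplicative in each argument: `[a ^ n, b] = [a, b] ^ n`
and `[a, b ^ n] = [a, b] ^ n`. If `n` is the order of `aG'`, then `a ^ n` is central, so
`[a, b] ^ n = [a ^ n, b] = 1`. If `m` is the index of `⟨aG'⟩`, then `b ^ m ≡ a ^ k` modulo the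
central subgroup `G'`, so `b ^ m` commutes with `a` and `[a, b] ^ m = [a, b ^ m] = 1`.
-/

section

open Subgroup
open scoped commutatorElement

variable {G : Type*} [Group G]

theorem commutatorElement_pow_left {a b : G} (h : Commute a ⁅a, b⁆) (n : ℕ) :
    ⁅a ^ n, b⁆ = ⁅a, b⁆ ^ n := by
  induction n with
  | zero => simp
  | succ n ih =>
    calc ⁅a ^ (n + 1), b⁆ = a ^ n * ⁅a, b⁆ * (b * (a ^ n)⁻¹ * b⁻¹) := by
          simp only [commutatorElement_def]; group
      _ = ⁅a, b⁆ * ⁅a ^ n, b⁆ := by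
          rw [(h.pow_left n).eq]; simp only [commutatorElement_def]; group
      _ = ⁅a, b⁆ ^ (n + 1) := by rw [ih, pow_succ']

theorem commutatorElement_pow_right {a b : G} (h : Commute b ⁅a, b⁆) (n : ℕ) :
    ⁅a, b ^ n⁆ = ⁅a, b⁆ ^ n := by
  have h' : Commute b ⁅b, a⁆ := by rw [← commutatorElement_inv]; exact h.inv_right
  rw [← commutatorElement_inv, commutatorElement_pow_left h', ← inv_pow, commutatorElement_inv]

theorem commute_commutatorElement_of_le_center (hG : commutator G ≤ center G) (a b g : G) :
    Commute g ⁅a, b⁆ :=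
  mem_center_iff.mp (hG (commutator_mem_commutator (mem_top a) (mem_top b))) g

theorem orderOf_commutatorElement_dvd_orderOf_mk (hG : commutator G ≤ center G) (a b : G) :
    orderOf ⁅a, b⁆ ∣ orderOf (a : G ⧸ commutator G) := by
  set n := orderOf (a : G ⧸ commutator G)
  have han : a ^ n ∈ center G := hG <| by
    rw [← QuotientGroup.eq_one_iff, QuotientGroup.mk_pow]
    exact pow_orderOf_eq_one _
  apply orderOf_dvd_of_pow_eq_one
  rw [← commutatorElement_pow_left (commute_commutatorElement_of_le_center hG a b a),
    commutatorElement_eq_one_iff_commute]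
  exact (mem_center_iff.mp han b).symm

theorem orderOf_commutatorElement_dvd_index_zpowers_mk (hG : commutator G ≤ center G) (a b : G) :
    orderOf ⁅a, b⁆ ∣ (zpowers (a : G ⧸ commutator G)).index := by
  -- so that `zpowers` is normal, as `pow_index_mem` requires
  let _ : CommGroup (G ⧸ commutator G) := Abelianization.commGroup G
  obtain ⟨k, hk⟩ := mem_zpowers_iff.mp ((zpowers (a : G ⧸ commutator G)).pow_index_mem b)
  set m := (zpowers (a : G ⧸ commutator G)).index
  have hz : (a ^ k)⁻¹ * b ^ m ∈ center G := hG <| by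
    rw [← QuotientGroup.eq_one_iff, QuotientGroup.mk_mul, QuotientGroup.mk_inv,
      QuotientGroup.mk_zpow, QuotientGroup.mk_pow, hk, inv_mul_cancel]
  apply orderOf_dvd_of_pow_eq_one
  rw [← commutatorElement_pow_right (commute_commutatorElement_of_le_center hG a b b),
    commutatorElement_eq_one_iff_commute]
  simpa using ((Commute.refl a).zpow_right k).mul_right (mem_center_iff.mp hz a)

end

theorem stmt_2_general {G : Type*} [Group G] (a b : G)
    (hcent : commutator G ≤ Subgroup.center G) :
    orderOf (a⁻¹ * b⁻¹ * a * b) ∣ orderOf ((a : G ⧸ commutator G) : G ⧸ commutator G) ∧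
    orderOf (a⁻¹ * b⁻¹ * a * b) ∣ (Subgroup.zpowers ((a : G ⧸ commutator G))).index := by
  -- Mathlib's `⁅g, h⁆` is `g * h * g⁻¹ * h⁻¹`, so the commutator here is `⁅a⁻¹, b⁻¹⁆`.
  have h₁ := orderOf_commutatorElement_dvd_orderOf_mk hcent a⁻¹ b⁻¹
  have h₂ := orderOf_commutatorElement_dvd_index_zpowers_mk hcent a⁻¹ b⁻¹
  simp only [commutatorElement_def, inv_inv, QuotientGroup.mk_inv, orderOf_inv,
    Subgroup.zpowers_inv] at h₁ h₂
  exact ⟨h₁, h₂⟩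

/-- If `G = ⟨a,b⟩` is finite, `G' = [G,G]` is cyclic of square-free order and central,
then the order of `[a,b]` divides both the order of the image of `a` in `G/G'` and
the index of `⟨aG'⟩` in `G/G'`. -/
theorem stmt_2 {G : Type*} [Group G] [Finite G] (a b : G)
    (hgen : Subgroup.closure ({a, b} : Set G) = ⊤)
    (hcyc : IsCyclic (commutator G))
    (hsf : Squarefree (Nat.card (commutator G)))
    (hcent : commutator G ≤ Subgroup.center G) :
    orderOf (a⁻¹ * b⁻¹ * a * b) ∣ orderOf ((a : G ⧸ commutator G) : G ⧸ commutator G) ∧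
    orderOf (a⁻¹ * b⁻¹ * a * b) ∣ (Subgroup.zpowers ((a : G ⧸ commutator G))).index :=
  stmt_2_general a b hcent
end

section
/- Suppose G is a finite group, G' = [G,G] is cyclic of square-free order, and G = ⟨a⟩G' for some a ∈ G (i.e., a together with G' generates G). Then a does not centralize any nontrivial subgroup of G'; equivalently, for every nonidentity γ ∈ G', [a,γ] ≠ e. -/
/-!
Since `G'` is abelian, `c ↦ ⁅c, a⁆` is an endomorphism of `G'`. Its image `S` is normal: it is
centralized by `G'` and stable under conjugation by `a`. In `G ⧸ S` the image of `a` commutes with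
the image of `G'`, and `G = ⟨a⟩ G'`, so `G ⧸ S` is abelian and `G' ≤ S`. Hence the endomorphism is
surjective, so injective since `G'` is finite: `a` centralizes no nontrivial element of `G'`.
-/

open scoped commutatorElement

open Subgroup

section

variable {G : Type*} [Group G]

theorem isMulCommutative_of_sup_eq_top {H K : Subgroup G} [IsMulCommutative H]
    [IsMulCommutative K] (hHK : H ≤ centralizer K) (hsup : H ⊔ K = ⊤) : IsMulCommutative G := by
  have hH : H ≤ center G := by
    rw [← SetLike.coe_subset_coe, ← centralizer_eq_top_iff_subset, eq_top_iff, ← hsup]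
    exact sup_le (le_centralizer H) (le_centralizer_iff.mp hHK)
  have hK : K ≤ center G := by
    rw [← SetLike.coe_subset_coe, ← centralizer_eq_top_iff_subset, eq_top_iff, ← hsup]
    exact sup_le hHK (le_centralizer K)
  rw [← commutator_eq_bot_iff, commutator_eq_bot_iff_center_eq_top, eq_top_iff, ← hsup]
  exact sup_le hH hK

theorem commutator_le_of_zpowers_sup_eq_top {N M : Subgroup G} [M.Normal] [IsMulCommutative N]
    {a : G} (hgen : zpowers a ⊔ N = ⊤) (hM : ∀ n ∈ N, ⁅n, a⁆ ∈ M) : commutator G ≤ M := by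
  rw [← Normal.quotient_commutative_iff_commutator_le]
  set π := QuotientGroup.mk' M
  refine isMulCommutative_of_sup_eq_top (H := zpowers (π a)) (K := N.map π) ?_ ?_
  · rw [zpowers_le]
    rintro _ ⟨n, hn, rfl⟩
    rw [← commutatorElement_eq_one_iff_mul_comm, ← map_commutatorElement,
      QuotientGroup.mk'_apply, QuotientGroup.eq_one_iff]
    exact hM n hn
  · rw [← MonoidHom.map_zpowers, ← Subgroup.map_sup, hgen,
      map_top_of_surjective _ (QuotientGroup.mk'_surjective M)]

namespace Subgroup

theorem Normal.commutatorElement_mem {N : Subgroup G} (hN : N.Normal) {c : G} (hc : c ∈ N)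
    (a : G) : ⁅c, a⁆ ∈ N :=
  commutator_le_left N ⊤ (commutator_mem_commutator hc (mem_top a))

variable (N : Subgroup G) [hN : N.Normal] [IsMulCommutative N]

def commutatorElementHom (a : G) : N →* N where
  toFun c := ⟨⁅(c : G), a⁆, hN.commutatorElement_mem c.2 a⟩
  map_one' := by ext; simp
  map_mul' c d := by
    have hca := hN.commutatorElement_mem c.2 a
    have hda := hN.commutatorElement_mem d.2 a
    ext
    change ⁅(c : G) * d, a⁆ = ⁅(c : G), a⁆ * ⁅(d : G), a⁆
    rw [commutatorElement_mul_left_eq_conj_mul, setLike_mul_comm c.2 hda, mul_inv_cancel_right,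
      setLike_mul_comm hda hca]

@[simp]
theorem coe_commutatorElementHom (a : G) (c : N) :
    (N.commutatorElementHom a c : G) = ⁅(c : G), a⁆ :=
  rfl

theorem commutator_le_map_range_commutatorElementHom [Finite G] {a : G}
    (hgen : zpowers a ⊔ N = ⊤) :
    _root_.commutator G ≤ (N.commutatorElementHom a).range.map N.subtype := by
  set S := (N.commutatorElementHom a).range.map N.subtype
  have hSN : S ≤ N := map_subtype_le _
  have hN_normalizes : N ≤ normalizer (S : Set G) :=
    (le_centralizer N).trans ((centralizer_le hSN).trans (centralizer_le_normalizer _))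
  -- conjugating by `a` commutes with `c ↦ ⁅c, a⁆`
  have ha_normalizes : a ∈ normalizer (S : Set G) := by
    refine mem_normalizer_fintype ?_
    rintro _ ⟨_, ⟨c, rfl⟩, rfl⟩
    refine ⟨N.commutatorElementHom a ⟨a * c * a⁻¹, hN.conj_mem c c.2 a⟩, ⟨_, rfl⟩, ?_⟩
    simp [conjugate_commutatorElement]
  have : S.Normal := by
    rw [← normalizer_eq_top_iff, eq_top_iff, ← hgen]
    exact sup_le (zpowers_le.mpr ha_normalizes) hN_normalizes
  exact commutator_le_of_zpowers_sup_eq_top hgen fun c hc ↦ mem_map.mpr ⟨_, ⟨⟨c, hc⟩, rfl⟩, rfl⟩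

end Subgroup

theorem injective_commutatorElementHom_commutator [Finite G] [IsMulCommutative (commutator G)]
    {a : G} (hgen : zpowers a ⊔ commutator G = ⊤) :
    Function.Injective ((commutator G).commutatorElementHom a) :=
  Finite.injective_iff_surjective.mpr fun c ↦ by
    obtain ⟨_, ⟨d, rfl⟩, hd⟩ := commutator_le_map_range_commutatorElementHom _ hgen c.2
    exact ⟨d, Subtype.ext hd⟩

end

theorem stmt_3_general {G : Type*} [Group G] [Finite G] (a : G)
    (hcyc : IsCyclic (commutator G))
    (hgen : Subgroup.zpowers a ⊔ commutator G = ⊤) :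
    ∀ γ ∈ commutator G, γ ≠ 1 → γ⁻¹ * a⁻¹ * γ * a ≠ 1 := by
  intro γ hγ hne h
  have hγa : ⁅γ, a⁆ = 1 := by
    rwa [commutatorElement_eq_one_iff_commute, ← Commute.inv_inv_iff,
      ← commutatorElement_eq_one_iff_commute, commutatorElement_def, inv_inv, inv_inv]
  have := (injective_iff_map_eq_one _).mp (injective_commutatorElementHom_commutator hgen)
    ⟨γ, hγ⟩ (Subtype.ext hγa)
  exact hne (congrArg Subtype.val this)

/-- If `G' = [G,G]` is cyclic of square-free order and `G = ⟨a⟩ G'`, then `a` does not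
centralize any nontrivial element of `G'`. -/
theorem stmt_3 {G : Type*} [Group G] [Finite G] (a : G)
    (hcyc : IsCyclic (commutator G))
    (hsf : Squarefree (Nat.card (commutator G)))
    (hgen : Subgroup.zpowers a ⊔ commutator G = ⊤) :
    ∀ γ ∈ commutator G, γ ≠ 1 → γ⁻¹ * a⁻¹ * γ * a ≠ 1 :=
  stmt_3_general a hcyc hgen
end

section
/- Let G be a finite 3-group such that G' = [G,G] is cyclic of order 3^μ and G/(G')³ is a nonabelian group of order 27. Then μ = 1, so |G| = 27. -/
/-!
Write `G' = ⟨c⟩` and `K = ⟨c³⟩`. Every `x ∈ G` acts on `G'` by `c ↦ c^k` with `k ≡ 1 (mod 3)`,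
because a `3`-group acts trivially on `G'/K ≅ C₃`; so `G'/K` is central in `G/K`. As `G/K` is not
abelian, `G/G'` (of order `9`) cannot be cyclic, so it has exponent `3` and all cubes lie in `G'`.

If `μ ≥ 2`, conjugating `w³ = c^t` by an element `z` acting by `a ≡ 1 (mod 9)` gives
`0 ≡ t (a - 1) ≡ m (1 + b + b²) ≡ 3m (mod 9)`, where `⁅z, w⁆ = c^m` and `w` acts by `b`; hence `3 ∣ m`.
Among `y, x, x y, x y²` there is always such a `z` with `⁅z, w⁆ = ⁅x, y⁆^{±1}` for `w ∈ {x, y}`,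
so all commutators lie in `K` and `G/K` would be abelian.
-/

open Subgroup
open scoped commutatorElement

theorem Int.exists_mul_pow_modEq_one_nine {a b : ℤ} (ha : a ≡ 1 [ZMOD 3]) (hb : b ≡ 1 [ZMOD 3])
    (hb9 : ¬ b ≡ 1 [ZMOD 9]) : ∃ j : ℕ, a * b ^ j ≡ 1 [ZMOD 9] := by
  -- the residues `1, 4, 7` form the subgroup of order `3` of `(ℤ/9)ˣ`, generated by `b`
  have hred (j : ℕ) : a * b ^ j ≡ a % 9 * (b % 9) ^ j [ZMOD 9] :=
    ((Int.mod_modEq a 9).mul ((Int.mod_modEq b 9).pow j)).symm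
  unfold Int.ModEq at ha hb hb9
  have ha' : a % 9 = 1 ∨ a % 9 = 4 ∨ a % 9 = 7 := by omega
  have hb' : b % 9 = 4 ∨ b % 9 = 7 := by omega
  rcases ha' with ha' | ha' | ha' <;> rcases hb' with hb' | hb' <;> simp only [ha', hb'] at hred
  exacts [⟨0, (hred 0).trans (by decide)⟩, ⟨0, (hred 0).trans (by decide)⟩,
    ⟨2, (hred 2).trans (by decide)⟩, ⟨1, (hred 1).trans (by decide)⟩,
    ⟨1, (hred 1).trans (by decide)⟩, ⟨2, (hred 2).trans (by decide)⟩]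

section

variable {G : Type*} [Group G] {c x y : G} {a b : ℤ}

theorem closure_image_pow_zpowers (n : ℕ) :
    Subgroup.closure ((· ^ n) '' (zpowers c : Set G)) = zpowers (c ^ n) := by
  apply le_antisymm
  · rw [closure_le]
    rintro _ ⟨_, ⟨j, rfl⟩, rfl⟩
    exact ⟨j, by simp only [← zpow_natCast, ← zpow_mul, mul_comm]⟩
  · rw [zpowers_le]
    exact subset_closure ⟨c, mem_zpowers c, rfl⟩

theorem card_quotient_zpowers_pow {p ν : ℕ} (hp : 0 < p)
    (hc : orderOf c = p ^ (ν + 1)) :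
    Nat.card (G ⧸ zpowers (c ^ p)) = Nat.card (G ⧸ zpowers c) * p := by
  have hcard := card_eq_card_quotient_mul_card_subgroup (zpowers (c ^ p))
  rw [card_eq_card_quotient_mul_card_subgroup (zpowers c), Nat.card_zpowers, Nat.card_zpowers,
    orderOf_pow_of_dvd hp.ne' (hc ▸ dvd_pow_self p ν.succ_ne_zero), hc, pow_succ,
    Nat.mul_div_cancel _ hp, mul_comm (p ^ ν), ← mul_assoc] at hcard
  exact (Nat.eq_of_mul_eq_mul_right (pow_pos hp ν) hcard).symm

theorem pow_eq_one_of_card_eq_prime_sq_of_not_isCyclic {p : ℕ} (hp : p.Prime)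
    (hG : Nat.card G = p ^ 2) (hcyc : ¬ IsCyclic G) (g : G) : g ^ p = 1 := by
  have : Finite G := Nat.finite_of_card_ne_zero (by simp [hG, hp.ne_zero])
  obtain ⟨i, hi, hgi⟩ := (Nat.dvd_prime_pow hp).mp (hG ▸ orderOf_dvd_natCard g)
  have hi2 : i ≠ 2 := by
    rintro rfl
    exact hcyc (isCyclic_of_orderOf_eq_card g (hgi.trans hG.symm))
  rw [← orderOf_dvd_iff_pow_eq_one, hgi]
  exact (pow_dvd_pow p (by omega : i ≤ 1)).trans (pow_one p).dvd

theorem commutator_le_of_isCyclic_quotient {N K : Subgroup G} [N.Normal] [K.Normal]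
    [IsCyclic (G ⧸ N)] (hKN : K ≤ N) (hNK : ⁅N, ⊤⁆ ≤ K) : commutator G ≤ K := by
  rw [← Subgroup.Normal.quotient_commutative_iff_commutator_le]
  let f : G ⧸ K →* G ⧸ N := QuotientGroup.map K N (MonoidHom.id G) hKN
  have hf : f.ker ≤ center (G ⧸ K) := by
    intro q hq
    induction q using QuotientGroup.induction_on with | H g =>
    rw [mem_center_iff]
    intro q'
    induction q' using QuotientGroup.induction_on with | H h =>
    have hgN : g ∈ N := (QuotientGroup.eq_one_iff g).mp hq
    rw [← QuotientGroup.mk_mul, ← QuotientGroup.mk_mul, QuotientGroup.eq]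
    have := commutator_le.mp hNK _ (inv_mem hgN) _ (mem_top h⁻¹)
    rwa [commutatorElement_def, inv_inv, inv_inv, ← mul_inv_rev, mul_assoc] at this
  exact f.isMulCommutative_of_isCyclic_of_ker_le_center hf

theorem exists_conj_eq_zpow [hc : (zpowers c).Normal] (x : G) : ∃ k : ℤ, x * c * x⁻¹ = c ^ k := by
  obtain ⟨k, hk⟩ := mem_zpowers_iff.mp (hc.conj_mem c (mem_zpowers c) x)
  exact ⟨k, hk.symm⟩

theorem conj_zpow_eq_zpow_mul (hx : x * c * x⁻¹ = c ^ a) (j : ℤ) :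
    x * c ^ j * x⁻¹ = c ^ (a * j) := by
  rw [← conj_zpow, hx, ← zpow_mul]

theorem conj_mul_eq_zpow_mul (hx : x * c * x⁻¹ = c ^ a) (hy : y * c * y⁻¹ = c ^ b) :
    x * y * c * (x * y)⁻¹ = c ^ (a * b) := by
  rw [← conj_zpow_eq_zpow_mul hx, ← hy]
  group

theorem conj_pow_eq_zpow_pow (hx : x * c * x⁻¹ = c ^ a) (n : ℕ) :
    x ^ n * c * (x ^ n)⁻¹ = c ^ (a ^ n) := by
  induction n with
  | zero => simp
  | succ n ih => rw [pow_succ', pow_succ', conj_mul_eq_zpow_mul hx ih]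

theorem zpow_mul_pow_of_conj_eq_zpow (hx : x * c * x⁻¹ = c ^ a) (m : ℤ) (n : ℕ) :
    (c ^ m * x) ^ n = c ^ (m * ∑ i ∈ Finset.range n, a ^ i) * x ^ n := by
  induction n with
  | zero => simp
  | succ n ih =>
    calc (c ^ m * x) ^ (n + 1)
        = c ^ m * (x * c ^ (m * ∑ i ∈ Finset.range n, a ^ i) * x⁻¹) * x ^ (n + 1) := by
          rw [pow_succ', ih, pow_succ']
          group
      _ = c ^ (m * ∑ i ∈ Finset.range (n + 1), a ^ i) * x ^ (n + 1) := by
          rw [conj_zpow_eq_zpow_mul hx, ← zpow_add, geom_sum_succ]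
          ring_nf

theorem IsPGroup.intModEq_one_of_conj_eq_zpow {p : ℕ} [Fact p.Prime] (hG : IsPGroup p G)
    (hp : p ∣ orderOf c) (hx : x * c * x⁻¹ = c ^ a) : a ≡ 1 [ZMOD p] := by
  obtain ⟨e, he⟩ := hG x
  have hfix : c ^ (a ^ p ^ e) = c ^ (1 : ℤ) := by
    rw [← conj_pow_eq_zpow_pow hx, he]
    simp
  have hmod : a ^ p ^ e ≡ 1 [ZMOD p] :=
    (zpow_eq_zpow_iff_modEq.mp hfix).of_dvd (Int.natCast_dvd_natCast.mpr hp)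
  rw [← ZMod.intCast_eq_intCast_iff] at hmod ⊢
  push_cast at hmod ⊢
  rwa [ZMod.pow_card_pow] at hmod

theorem IsPGroup.commutator_zpowers_le {p : ℕ} [Fact p.Prime] (hG : IsPGroup p G)
    [(zpowers c).Normal] (hp : p ∣ orderOf c) : ⁅zpowers c, ⊤⁆ ≤ zpowers (c ^ p) := by
  rw [commutator_le]
  rintro _ ⟨j, rfl⟩ g -
  obtain ⟨k, hk⟩ := exists_conj_eq_zpow (c := c) g
  obtain ⟨r, hr⟩ := (hG.intModEq_one_of_conj_eq_zpow hp hk).symm.dvd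
  refine mem_zpowers_iff.mpr ⟨-(j * r), ?_⟩
  calc (c ^ p) ^ (-(j * r)) = c ^ j * c ^ (k * -j) := by
        rw [← zpow_natCast, ← zpow_mul, ← zpow_add]
        congr 1
        linear_combination j * hr
    _ = ⁅c ^ j, g⁆ := by
        rw [← conj_zpow_eq_zpow_mul hk, commutatorElement_def, zpow_neg]
        group

theorem commutatorElement_mem_zpowers_cube {z w : G} (h9 : 9 ∣ orderOf c)
    (hz : z * c * z⁻¹ = c ^ a) (ha : a ≡ 1 [ZMOD 9]) (hw : w * c * w⁻¹ = c ^ b)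
    (hb : b ≡ 1 [ZMOD 3]) (hw3 : w ^ 3 ∈ zpowers c) (hzw : ⁅z, w⁆ ∈ zpowers c) :
    ⁅z, w⁆ ∈ zpowers (c ^ 3) := by
  obtain ⟨t, ht⟩ := mem_zpowers_iff.mp hw3
  obtain ⟨m, hm⟩ := mem_zpowers_iff.mp hzw
  have hconj : c ^ (a * t) = c ^ (m * ∑ i ∈ Finset.range 3, b ^ i + t) :=
    calc c ^ (a * t) = z * w ^ 3 * z⁻¹ := by rw [← ht, conj_zpow_eq_zpow_mul hz]
      _ = (c ^ m * w) ^ 3 := by rw [← conj_pow, hm, commutatorElement_def]; group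
      _ = c ^ (m * ∑ i ∈ Finset.range 3, b ^ i + t) := by
          rw [zpow_mul_pow_of_conj_eq_zpow hw, ← ht, ← zpow_add]
  obtain ⟨D, hD⟩ := ((zpow_eq_zpow_iff_modEq.mp hconj).of_dvd (Int.natCast_dvd_natCast.mpr h9)).dvd
  obtain ⟨s, hs⟩ := ha.symm.dvd
  obtain ⟨r, hr⟩ := hb.symm.dvd
  simp only [Finset.sum_range_succ, Finset.sum_range_zero] at hD
  have h3m : 3 * m = 9 * (D + s * t - m * r - m * r ^ 2) := by
    linear_combination hD + t * hs - m * (b + 2 + 3 * r) * hr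
  refine mem_zpowers_iff.mpr ⟨D + s * t - m * r - m * r ^ 2, ?_⟩
  rw [← zpow_natCast, ← zpow_mul, ← hm]
  congr 1
  push_cast
  omega

theorem commutator_le_zpowers_cube (hG : IsPGroup 3 G) (hG' : commutator G ≤ zpowers c)
    (h9 : 9 ∣ orderOf c) (hcube : ∀ g : G, g ^ 3 ∈ zpowers c) : commutator G ≤ zpowers (c ^ 3) := by
  have : Fact (Nat.Prime 3) := ⟨Nat.prime_three⟩
  have : (zpowers c).Normal := .of_commutator_le G hG'
  have hexp (x : G) : ∃ k : ℤ, x * c * x⁻¹ = c ^ k ∧ k ≡ 1 [ZMOD 3] := by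
    obtain ⟨k, hk⟩ := exists_conj_eq_zpow (c := c) x
    exact ⟨k, hk, hG.intModEq_one_of_conj_eq_zpow ((by norm_num : 3 ∣ 9).trans h9) hk⟩
  have hmem (x y : G) : ⁅x, y⁆ ∈ zpowers c :=
    hG' (commutator_def G ▸ commutator_mem_commutator (mem_top x) (mem_top y))
  rw [commutator_def, commutator_le]
  rintro x - y -
  obtain ⟨a, ha, ha3⟩ := hexp x
  obtain ⟨b, hb, hb3⟩ := hexp y
  by_cases hb9 : b ≡ 1 [ZMOD 9]
  · rw [← inv_inv ⁅x, y⁆, commutatorElement_inv]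
    exact inv_mem (commutatorElement_mem_zpowers_cube h9 hb hb9 ha ha3 (hcube x) (hmem y x))
  · obtain ⟨j, hj⟩ := Int.exists_mul_pow_modEq_one_nine ha3 hb3 hb9
    have hxy : ⁅x * y ^ j, y⁆ = ⁅x, y⁆ := by
      simp only [commutatorElement_def]
      group
    rw [← hxy]
    exact commutatorElement_mem_zpowers_cube h9
      (conj_mul_eq_zpow_mul ha (conj_pow_eq_zpow_pow hb j)) hj hb hb3 (hcube y) (hmem _ _)

end

theorem stmt_4_general {G : Type*} [Group G] (μ : ℕ)
    (h3 : IsPGroup 3 G)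
    (hcyc : IsCyclic (commutator G))
    (hcard : Nat.card (commutator G) = 3 ^ μ)
    (K : Subgroup G)
    (hK : K = Subgroup.closure ((fun g => g ^ 3) '' (commutator G : Set G)))
    [K.Normal]
    (hcard27 : Nat.card (G ⧸ K) = 27)
    (hnonab : ¬ ∀ x y : G ⧸ K, x * y = y * x) :
    μ = 1 ∧ Nat.card G = 27 := by
  have : Fact (Nat.Prime 3) := ⟨Nat.prime_three⟩
  have hG'K : ¬ commutator G ≤ K := fun h =>
    hnonab (@mul_comm' _ _ (Subgroup.Normal.quotient_commutative_iff_commutator_le.mpr h))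
  obtain ⟨c, hc⟩ := (commutator G).isCyclic_iff_exists_zpowers_eq_top.mp hcyc
  have : (zpowers c).Normal := .of_commutator_le G hc.ge
  have hord : orderOf c = 3 ^ μ := by rw [← Nat.card_zpowers, hc, hcard]
  rw [← hc, closure_image_pow_zpowers] at hK
  subst hK
  obtain ⟨ν, rfl⟩ : ∃ ν, μ = ν + 1 := by
    refine Nat.exists_eq_succ_of_ne_zero fun hμ => hG'K ?_
    rw [← hc, orderOf_eq_one_iff.mp (hord.trans (by rw [hμ, pow_zero])), zpowers_one_eq_bot]
    exact bot_le
  have hcardAb : Nat.card (G ⧸ zpowers c) = 3 ^ 2 := by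
    have := card_quotient_zpowers_pow (by norm_num) hord
    omega
  have hnotcyc : ¬ IsCyclic (G ⧸ zpowers c) := fun _ =>
    hG'K (commutator_le_of_isCyclic_quotient (zpowers_le.mpr (pow_mem (mem_zpowers c) 3))
      (h3.commutator_zpowers_le (hord ▸ dvd_pow_self 3 ν.succ_ne_zero)))
  have hcube (g : G) : g ^ 3 ∈ zpowers c := by
    rw [← QuotientGroup.eq_one_iff, QuotientGroup.mk_pow]
    exact pow_eq_one_of_card_eq_prime_sq_of_not_isCyclic Nat.prime_three hcardAb hnotcyc _
  have hν : ν = 0 := by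
    by_contra hν
    refine hG'K (commutator_le_zpowers_cube h3 hc.ge ?_ hcube)
    rw [hord]
    exact pow_dvd_pow 3 (by omega : 2 ≤ ν + 1)
  subst hν
  rw [card_eq_card_quotient_mul_card_subgroup (zpowers c), hcardAb, Nat.card_zpowers, hord]
  exact ⟨rfl, rfl⟩

/-- If `G` is a finite 3-group whose commutator subgroup is cyclic of order `3^μ`,
and `G/(G')³` is a nonabelian group of order 27, then `μ = 1` and `|G| = 27`. -/
theorem stmt_4 {G : Type*} [Group G] [Finite G] (μ : ℕ)
    (h3 : IsPGroup 3 G)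
    (hcyc : IsCyclic (commutator G))
    (hcard : Nat.card (commutator G) = 3 ^ μ)
    (K : Subgroup G)
    (hK : K = Subgroup.closure ((fun g => g ^ 3) '' (commutator G : Set G)))
    [K.Normal]
    (hcard27 : Nat.card (G ⧸ K) = 27)
    (hnonab : ¬ ∀ x y : G ⧸ K, x * y = y * x) :
    μ = 1 ∧ Nat.card G = 27 :=
  stmt_4_general μ h3 hcyc hcard K hK hcard27 hnonab
end

section
/- Let G be a finite group of odd order whose commutator subgroup G' has order pq, where p < q are distinct primes. Then G' is cyclic. -/
/-!
The Sylow `q`-subgroup `Q` of `G'` has index `p < q`, so it is unique, hence characteristic in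
`G'` and normal in `G`. Being cyclic, `Q` has an abelian automorphism group, so the conjugation
action of `G` on `Q` kills `G'`: thus `Q` is central in `G'`. Then `G' / Z(G')` has order dividing
`p`, so it is cyclic and `G'` is abelian; an abelian group of squarefree order is cyclic.
-/

theorem commutator_le_centralizer_of_isCyclic {G : Type*} [Group G] (N : Subgroup G)
    [N.Normal] [IsCyclic N] : commutator G ≤ Subgroup.centralizer (N : Set G) := by
  let _ : CommGroup (MulAut N) := (IsCyclic.mulAutMulEquiv N).toMonoidHom.commGroupOfInjective
    (IsCyclic.mulAutMulEquiv N).injective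
  intro g hg n hn
  have hconj : MulAut.conjNormal g = 1 :=
    Abelianization.commutator_subset_ker (MulAut.conjNormal (H := N)) hg
  have : g * n * g⁻¹ = n := congrArg (fun σ : MulAut N ↦ (σ ⟨n, hn⟩ : G)) hconj
  exact (mul_inv_eq_iff_eq_mul.mp this).symm

theorem Sylow.subsingleton_of_index_le {G : Type*} [Group G] [Finite G] {p : ℕ} [Fact p.Prime]
    (P : Sylow p G) (h : (P : Subgroup G).index ≤ p) : Subsingleton (Sylow p G) := by
  have hmod : Nat.card (Sylow p G) % p = 1 % p := card_sylow_modEq_one p G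
  have hle : Nat.card (Sylow p G) ≤ p :=
    (Nat.le_of_dvd (Subgroup.index_ne_zero_of_finite.bot_lt) P.card_dvd_index).trans h
  have hpos : 0 < Nat.card (Sylow p G) := Nat.card_pos
  have hp : 1 < p := (Fact.out : p.Prime).one_lt
  rw [← Finite.card_le_one_iff_subsingleton]
  rcases hle.lt_or_eq with hlt | heq
  · rw [Nat.mod_eq_of_lt hlt, Nat.mod_eq_of_lt hp] at hmod
    omega
  · rw [heq, Nat.mod_self, Nat.mod_eq_of_lt hp] at hmod
    omega

theorem isMulCommutative_of_index_center_dvd_prime {G : Type*} [Group G] {p : ℕ} [Fact p.Prime]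
    (h : (Subgroup.center G).index ∣ p) : IsMulCommutative G :=
  have : IsCyclic (G ⧸ Subgroup.center G) :=
    isCyclic_of_card_dvd_prime (p := p) (by rwa [← Subgroup.index_eq_card])
  (QuotientGroup.mk' _).isMulCommutative_of_isCyclic_of_ker_le_center
    (by rw [QuotientGroup.ker_mk'])

open scoped IsMulCommutative in
theorem isCyclic_of_squarefree_card {G : Type*} [Group G] [Finite G] [IsMulCommutative G]
    (h : Squarefree (Nat.card G)) : IsCyclic G :=
  have := IsZGroup.of_squarefree h
  IsCyclic.of_exponent_eq_card (IsZGroup.exponent_eq_card G)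

theorem stmt_7_general {G : Type*} [Group G] [Finite G]
    (p q : ℕ) (hp : p.Prime) (hq : q.Prime) (hpq : p < q)
    (hcard : Nat.card (commutator G) = p * q) :
    IsCyclic (commutator G) := by
  have := Fact.mk hp
  have := Fact.mk hq
  set H := commutator G
  obtain ⟨Q⟩ : Nonempty (Sylow q H) := inferInstance
  have hQcard : Nat.card Q = q := by
    rw [Q.card_eq_multiplicity, hcard, Nat.factorization_mul hp.ne_zero hq.ne_zero,
      hp.factorization, hq.factorization]
    simp [hpq.ne]
  have hQindex : (Q : Subgroup H).index = p := by
    have := (Q : Subgroup H).card_mul_index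
    rw [hQcard, hcard, mul_comm p] at this
    exact Nat.eq_of_mul_eq_mul_left hq.pos this
  have := Q.subsingleton_of_index_le (hQindex ▸ hpq.le)
  -- `Q` is characteristic in the normal subgroup `H`, so its image in `G` is normal
  let Q' := (Q : Subgroup H).map H.subtype
  have : IsCyclic Q' := isCyclic_of_prime_card (p := q) <| by
    rw [← hQcard]
    exact (Nat.card_congr (Subgroup.equivMapOfInjective _ _ H.subtype_injective).toEquiv).symm
  have hQcentral : (Q : Subgroup H) ≤ Subgroup.center H := fun x hx ↦
    Subgroup.mem_center_iff.mpr fun h ↦ Subtype.ext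
      (commutator_le_centralizer_of_isCyclic Q' h.2 x ⟨x, hx, rfl⟩).symm
  have := isMulCommutative_of_index_center_dvd_prime
    (hQindex ▸ Subgroup.index_dvd_of_le hQcentral)
  refine isCyclic_of_squarefree_card ?_
  rw [hcard, Nat.squarefree_mul_iff]
  exact ⟨(Nat.coprime_primes hp hq).mpr hpq.ne, hp.prime.squarefree, hq.prime.squarefree⟩

/-- If `G` has odd order and its commutator subgroup has order `pq` with `p < q`
distinct primes, then the commutator subgroup is cyclic. -/
theorem stmt_7 {G : Type*} [Group G] [Finite G]
    (hodd : Odd (Nat.card G)) (p q : ℕ) (hp : p.Prime) (hq : q.Prime) (hpq : p < q)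
    (hcard : Nat.card (commutator G) = p * q) :
    IsCyclic (commutator G) :=
  stmt_7_general p q hp hq hpq hcard
end

section
/- Let G be a group of order 9pq where p and q are distinct odd primes both different from 3. Then G has a normal subgroup of order pq, and consequently the commutator subgroup [G,G] has order dividing pq. -/
/-!
Let `P` be a Sylow 3-subgroup; it has order 9, so it is abelian and its index is `pq`.
An automorphism of prime order `r` of a group of order 9 fixes a proper subgroup, of order 1 or 3,
and the number of fixed points is `≡ 9 (mod r)`; hence `r ∣ 8` or `r ∣ 6`, so `|Aut P|` is
coprime to `pq`. Since `N(P)/C(P)` embeds in `Aut P` and has order dividing `[G : P] = pq`,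
we get `N(P) = C(P)`, and Burnside's transfer theorem yields a normal complement `N` of order
`pq`. The quotient `G/N` has order 9, hence is abelian, so `[G, G] ≤ N`.
-/

open Subgroup

theorem Nat.coprime_six_of_prime {r : ℕ} (hr : r.Prime) (h2 : r ≠ 2) (h3 : r ≠ 3) :
    Nat.Coprime 6 r :=
  Nat.Coprime.mul_left ((Nat.coprime_primes prime_two hr).mpr h2.symm)
    ((Nat.coprime_primes prime_three hr).mpr h3.symm)

theorem Sylow.card_eq_pow_of_card_eq_pow_mul {G : Type*} [Group G] [Finite G] {p n m : ℕ}
    [Fact p.Prime] (P : Sylow p G) (hG : Nat.card G = p ^ n * m) (hm : ¬ p ∣ m) :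
    Nat.card P = p ^ n := by
  have hp : p.Prime := Fact.out
  have hm0 : m ≠ 0 := by rintro rfl; exact hm (dvd_zero p)
  rw [P.card_eq_multiplicity, hG, Nat.factorization_mul (pow_ne_zero n hp.ne_zero) hm0,
    Finsupp.add_apply, hp.factorization_pow, Finsupp.single_eq_same,
    Nat.factorization_eq_zero_of_not_dvd hm, add_zero]

theorem MulAut.exists_subgroup_ne_top_card_modEq_of_orderOf_eq_prime {P : Type*} [Group P]
    [Finite P] {r : ℕ} [Fact r.Prime] {σ : MulAut P} (hσ : orderOf σ = r) :
    ∃ S : Subgroup P, S ≠ ⊤ ∧ Nat.card P ≡ Nat.card S [MOD r] := by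
  have hr : IsPGroup r (zpowers σ) :=
    IsPGroup.of_card (n := 1) (by rw [Nat.card_zpowers, hσ, pow_one])
  refine ⟨FixedPoints.subgroup (zpowers σ) P, fun htop => ?_, hr.card_modEq_card_fixedPoints P⟩
  have : σ = 1 := MulEquiv.ext fun x =>
    (htop ▸ mem_top x : x ∈ FixedPoints.subgroup (zpowers σ) P) ⟨σ, mem_zpowers σ⟩
  rw [this, orderOf_one] at hσ
  exact (Fact.out : r.Prime).one_lt.ne hσ

theorem coprime_card_mulAut_of_card_eq_nine {P : Type*} [Group P] (hP : Nat.card P = 9)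
    {n : ℕ} (hn : Nat.Coprime 6 n) : Nat.Coprime (Nat.card (MulAut P)) n := by
  have : Finite P := Nat.finite_of_card_ne_zero (by rw [hP]; norm_num)
  refine Nat.coprime_of_dvd fun r hr hrA hrn => ?_
  have : Fact r.Prime := ⟨hr⟩
  obtain ⟨σ, hσ⟩ := exists_prime_orderOf_dvd_card' r hrA
  obtain ⟨S, hS, hmod⟩ := MulAut.exists_subgroup_ne_top_card_modEq_of_orderOf_eq_prime hσ
  have hS9 : Nat.card S ∣ 9 ∧ Nat.card S ≠ 9 :=
    ⟨hP ▸ S.card_subgroup_dvd_card, fun h => hS ((card_eq_iff_eq_top S).mp (h.trans hP.symm))⟩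
  have hr6 : r ∣ 6 := by
    have hle := Nat.le_of_dvd (by norm_num) hS9.1
    rw [hP] at hmod
    interval_cases h : Nat.card S <;> norm_num at hS9
    · have h8 : r ∣ 2 ^ 3 := (Nat.modEq_iff_dvd' (by norm_num)).mp hmod.symm
      exact (hr.dvd_of_dvd_pow h8).trans (by norm_num)
    · exact (Nat.modEq_iff_dvd' (by norm_num)).mp hmod.symm
  exact Nat.not_coprime_of_dvd_of_dvd hr.one_lt hr6 hrn hn

theorem Subgroup.normalizer_le_centralizer_of_coprime {G : Type*} [Group G] [Finite G]
    (H : Subgroup G) [IsMulCommutative H] (h : Nat.Coprime (Nat.card (MulAut H)) H.index) :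
    normalizer H ≤ centralizer (H : Set G) := by
  -- `N(H)/C(H)` embeds in `Aut H`, and its order divides `[G : H]` because `H ≤ C(H)`.
  have hAut := card_dvd_of_injective _ (QuotientGroup.kerLift_injective H.normalizerMonoidHom)
  rw [normalizerMonoidHom_ker, ← index, ← relIndex] at hAut
  refine relIndex_eq_one.mp (Nat.eq_one_of_dvd_coprimes h hAut ?_)
  exact (relIndex_dvd_of_le_left _ (le_centralizer H)).trans
    (relIndex_dvd_index_of_le H.le_normalizer)

theorem stmt_8_general {G : Type*} [Group G] (p q : ℕ)
    (hp : p.Prime) (hq : q.Prime)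
    (hp2 : p ≠ 2) (hp3 : p ≠ 3) (hq2 : q ≠ 2) (hq3 : q ≠ 3)
    (hcard : Nat.card G = 9 * p * q) :
    (∃ N : Subgroup G, N.Normal ∧ Nat.card N = p * q) ∧
      Nat.card (commutator G) ∣ p * q := by
  have : Finite G := Nat.finite_of_card_ne_zero (by simp [hcard, hp.ne_zero, hq.ne_zero])
  have : Fact (Nat.Prime 3) := ⟨Nat.prime_three⟩
  have hcop : Nat.Coprime 6 (p * q) :=
    (Nat.coprime_six_of_prime hp hp2 hp3).mul_right (Nat.coprime_six_of_prime hq hq2 hq3)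
  obtain ⟨P⟩ : Nonempty (Sylow 3 G) := inferInstance
  have hP : Nat.card P = 3 ^ 2 := P.card_eq_pow_of_card_eq_pow_mul (by rw [hcard]; ring)
    (Nat.prime_three.coprime_iff_not_dvd.mp (hcop.coprime_dvd_left (by norm_num)))
  have : IsMulCommutative P := IsPGroup.isMulCommutative_of_card_eq_prime_sq hP
  have hindex : P.index = p * q := by
    have := P.card_mul_index
    rw [hP, hcard] at this
    exact Nat.eq_of_mul_eq_mul_left (by norm_num) (this.trans (by ring))
  have hNC := (P : Subgroup G).normalizer_le_centralizer_of_coprime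
    (hindex ▸ coprime_card_mulAut_of_card_eq_nine hP hcop)
  have hcompl := MonoidHom.ker_transferSylow_isComplement' P hNC
  set N := (MonoidHom.transferSylow P hNC).ker
  have hN : Nat.card N = p * q := hcompl.index_eq_card ▸ hindex
  refine ⟨⟨N, inferInstance, hN⟩, hN ▸ card_dvd_of_le ?_⟩
  have : IsMulCommutative (G ⧸ N) :=
    IsPGroup.isMulCommutative_of_card_eq_prime_sq (p := 3) (hcompl.symm.index_eq_card.trans hP)
  exact Normal.quotient_commutative_iff_commutator_le.mp this

/-- A group of order `9pq`, with `p, q` distinct primes different from 2 and 3,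
has a normal subgroup of order `pq`, and hence `|[G,G]|` divides `pq`. -/
theorem stmt_8 {G : Type*} [Group G] (p q : ℕ)
    (hp : p.Prime) (hq : q.Prime) (hpq : p ≠ q)
    (hp2 : p ≠ 2) (hp3 : p ≠ 3) (hq2 : q ≠ 2) (hq3 : q ≠ 3)
    (hcard : Nat.card G = 9 * p * q) :
    (∃ N : Subgroup G, N.Normal ∧ Nat.card N = p * q) ∧
      Nat.card (commutator G) ∣ p * q :=
  stmt_8_general p q hp hq hp2 hp3 hq2 hq3 hcard
end

section
/- Let G be a finite group with commutator subgroup G' ≅ Z_p × Z_q (p, q distinct primes), suppose |G| is odd, and let π₁, π₂, π₃ ∈ G' be three elements such that for all 1 ≤ i < j ≤ 3 the element πᵢ⁻¹πⱼ generates G'. Then for every γ ∈ G' there exists some i with ⟨γ·πᵢ⟩ = G'. -/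
/-!
Since `π₁⁻¹π₂` generates `G'`, the group `G'` is cyclic of order `pq`, so an element of `G'`
that does not generate it is killed by `p` or by `q`. If none of `γπ₁, γπ₂, γπ₃` generated `G'`,
two of them, say `γπᵢ` and `γπⱼ`, would be killed by the same prime `r`; as they commute, so
would `(γπᵢ)⁻¹(γπⱼ) = πᵢ⁻¹πⱼ`, which has order `pq > r`.
-/

open Subgroup

lemma dvd_or_dvd_of_dvd_mul_of_ne {p q n : ℕ} (hp : p.Prime) (hq : q.Prime)
    (hn : n ∣ p * q) (hne : n ≠ p * q) : n ∣ p ∨ n ∣ q := by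
  obtain ⟨k₁, k₂, hk₁, hk₂, rfl⟩ := Nat.dvd_mul.mp hn
  rcases (Nat.dvd_prime hp).mp hk₁ with rfl | rfl
  · simpa using Or.inr hk₂
  · rcases (Nat.dvd_prime hq).mp hk₂ with rfl | rfl
    · simp
    · exact absurd rfl hne

section

variable {G : Type*} [Group G]

lemma commute_of_mem_zpowers {g x y : G} (hx : x ∈ zpowers g) (hy : y ∈ zpowers g) :
    Commute x y := by
  obtain ⟨m, rfl⟩ := mem_zpowers_iff.mp hx
  obtain ⟨n, rfl⟩ := mem_zpowers_iff.mp hy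
  exact Commute.zpow_zpow_self g m n

lemma pow_eq_one_or_pow_eq_one_of_zpowers_ne {H : Subgroup G} {p q : ℕ} (hp : p.Prime)
    (hq : q.Prime) (hH : Nat.card H = p * q) {x : G} (hx : x ∈ H) (hne : zpowers x ≠ H) :
    x ^ p = 1 ∨ x ^ q = 1 := by
  have : Finite H := Nat.finite_of_card_ne_zero (hH ▸ mul_ne_zero hp.ne_zero hq.ne_zero)
  have hle : zpowers x ≤ H := zpowers_le.mpr hx
  have hdvd : orderOf x ∣ p * q := hH ▸ Nat.card_zpowers x ▸ card_dvd_of_le hle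
  have hne' : orderOf x ≠ p * q := fun h =>
    hne (eq_of_le_of_card_ge hle (by rw [Nat.card_zpowers, hH, h]))
  simpa only [orderOf_dvd_iff_pow_eq_one] using dvd_or_dvd_of_dvd_mul_of_ne hp hq hdvd hne'

lemma not_pow_eq_one_and_pow_eq_one_of_zpowers_inv_mul_eq {H : Subgroup G} {a b : G}
    (hab : Commute a b) (hgen : zpowers (a⁻¹ * b) = H) {r : ℕ} (hr0 : 0 < r)
    (hr : r < Nat.card H) : ¬(a ^ r = 1 ∧ b ^ r = 1) := by
  rintro ⟨ha, hb⟩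
  have hdvd : orderOf (a⁻¹ * b) ∣ r := orderOf_dvd_of_pow_eq_one <| by
    rw [hab.inv_left.mul_pow, inv_pow, ha, hb, inv_one, one_mul]
  rw [← Nat.card_zpowers, hgen] at hdvd
  exact absurd (Nat.le_of_dvd hr0 hdvd) (not_le.mpr hr)

theorem zpowers_eq_or_of_zpowers_inv_mul_eq {H : Subgroup G} {p q : ℕ} (hp : p.Prime)
    (hq : q.Prime) (hH : Nat.card H = p * q) {a b c : G} (ha : a ∈ H) (hb : b ∈ H)
    (hc : c ∈ H) (hab : zpowers (a⁻¹ * b) = H) (hac : zpowers (a⁻¹ * c) = H)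
    (hbc : zpowers (b⁻¹ * c) = H) :
    zpowers a = H ∨ zpowers b = H ∨ zpowers c = H := by
  have hcomm : ∀ x ∈ H, ∀ y ∈ H, Commute x y := by
    rw [← hab]
    exact fun x hx y hy => commute_of_mem_zpowers hx hy
  have hpH : p < Nat.card H := hH ▸ lt_mul_of_one_lt_right hp.pos hq.one_lt
  have hqH : q < Nat.card H := hH ▸ lt_mul_of_one_lt_left hq.pos hp.one_lt
  by_contra! hgen
  obtain ⟨hna, hnb, hnc⟩ := hgen
  have hnot {x y : G} (hx : x ∈ H) (hy : y ∈ H) (hxy : zpowers (x⁻¹ * y) = H) :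
      ¬(x ^ p = 1 ∧ y ^ p = 1) ∧ ¬(x ^ q = 1 ∧ y ^ q = 1) :=
    ⟨not_pow_eq_one_and_pow_eq_one_of_zpowers_inv_mul_eq (hcomm x hx y hy) hxy hp.pos hpH,
      not_pow_eq_one_and_pow_eq_one_of_zpowers_inv_mul_eq (hcomm x hx y hy) hxy hq.pos hqH⟩
  have hnab := hnot ha hb hab
  have hnac := hnot ha hc hac
  have hnbc := hnot hb hc hbc
  have hpqa := pow_eq_one_or_pow_eq_one_of_zpowers_ne hp hq hH ha hna
  have hpqb := pow_eq_one_or_pow_eq_one_of_zpowers_ne hp hq hH hb hnb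
  have hpqc := pow_eq_one_or_pow_eq_one_of_zpowers_ne hp hq hH hc hnc
  tauto

end

theorem stmt_10_general {G : Type*} [Group G]
    (p q : ℕ) (hp : p.Prime) (hq : q.Prime)
    (hcard : Nat.card (commutator G) = p * q)
    (π₁ π₂ π₃ : G) (h₁ : π₁ ∈ commutator G) (h₂ : π₂ ∈ commutator G)
    (h₃ : π₃ ∈ commutator G)
    (h12 : Subgroup.zpowers (π₁⁻¹ * π₂) = commutator G)
    (h13 : Subgroup.zpowers (π₁⁻¹ * π₃) = commutator G)
    (h23 : Subgroup.zpowers (π₂⁻¹ * π₃) = commutator G) :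
    ∀ γ ∈ commutator G,
      Subgroup.zpowers (γ * π₁) = commutator G ∨
      Subgroup.zpowers (γ * π₂) = commutator G ∨
      Subgroup.zpowers (γ * π₃) = commutator G := by
  intro γ hγ
  have hdiff (x y : G) : (γ * x)⁻¹ * (γ * y) = x⁻¹ * y := by group
  exact zpowers_eq_or_of_zpowers_inv_mul_eq hp hq hcard (mul_mem hγ h₁) (mul_mem hγ h₂)
    (mul_mem hγ h₃) (by rwa [hdiff]) (by rwa [hdiff]) (by rwa [hdiff])

/-- If `|G|` is odd, `G' ≅ Z_p × Z_q` (`p ≠ q` primes) and `π₁, π₂, π₃ ∈ G'` are such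
that each pairwise difference `πᵢ⁻¹πⱼ` generates `G'`, then for every `γ ∈ G'` some
`γ·πᵢ` generates `G'`. -/
theorem stmt_10 {G : Type*} [Group G] [Finite G]
    (hodd : Odd (Nat.card G)) (p q : ℕ) (hp : p.Prime) (hq : q.Prime) (hpq : p ≠ q)
    (hcard : Nat.card (commutator G) = p * q)
    (π₁ π₂ π₃ : G) (h₁ : π₁ ∈ commutator G) (h₂ : π₂ ∈ commutator G)
    (h₃ : π₃ ∈ commutator G)
    (h12 : Subgroup.zpowers (π₁⁻¹ * π₂) = commutator G)
    (h13 : Subgroup.zpowers (π₁⁻¹ * π₃) = commutator G)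
    (h23 : Subgroup.zpowers (π₂⁻¹ * π₃) = commutator G) :
    ∀ γ ∈ commutator G,
      Subgroup.zpowers (γ * π₁) = commutator G ∨
      Subgroup.zpowers (γ * π₂) = commutator G ∨
      Subgroup.zpowers (γ * π₃) = commutator G :=
  stmt_10_general p q hp hq hcard π₁ π₂ π₃ h₁ h₂ h₃ h12 h13 h23
end

section
/- Let G' = Z_p × Z_q with p, q distinct primes, and let π₁, π₂, π₃, π₄ ∈ G' satisfy: π₁⁻¹π₂ has order divisible by p (its cyclic subgroup contains Z_p), and ⟨π₁⁻¹π₃⟩ = ⟨π₂⁻¹π₄⟩ = Z_q. Then for every γ ∈ G' there exists i ∈ {1,2,3,4} such that γ·πᵢ generates G'. -/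
/-!
An element of `Z_p × Z_q` generates the group exactly when both of its coordinates are
nontrivial, since the orders `p` and `q` are coprime. The hypotheses are invariant under left
translation by `γ`, and in coordinates they say: `π₁` and `π₂` differ in the `Z_p`-coordinate,
while `π₃` (resp. `π₄`) agrees with `π₁` (resp. `π₂`) there but differs from it in the
`Z_q`-coordinate. At most one of `γπ₁, γπ₂` has trivial `Z_p`-coordinate; if it is `γπ₂`, then
`γπ₁` and `γπ₃` both have nontrivial `Z_p`-coordinate and at most one of them has trivial
`Z_q`-coordinate; symmetrically otherwise.
-/

open Subgroup

section
variable {G H : Type*} [Group G] [Group H]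

theorem Prod.fst_ne_one_of_prod_top_bot_le_zpowers [Nontrivial G] {x : G × H}
    (h : (⊤ : Subgroup G).prod (⊥ : Subgroup H) ≤ zpowers x) : x.1 ≠ 1 := by
  intro hx
  obtain ⟨a, ha⟩ := exists_ne (1 : G)
  obtain ⟨n, hn⟩ := h (x := (a, 1)) (mem_prod.2 ⟨mem_top a, one_mem _⟩)
  exact ha (by simpa [hx] using (congrArg Prod.fst hn).symm)

theorem Prod.fst_eq_one_and_snd_ne_one_of_zpowers_eq_bot_prod_top [Nontrivial H] {x : G × H}
    (h : zpowers x = (⊥ : Subgroup G).prod (⊤ : Subgroup H)) : x.1 = 1 ∧ x.2 ≠ 1 := by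
  have hx₁ : x.1 = 1 := mem_bot.1 (mem_prod.1 (h ▸ mem_zpowers x)).1
  refine ⟨hx₁, fun hx₂ => ?_⟩
  obtain ⟨b, hb⟩ := exists_ne (1 : H)
  have hb' : ((1 : G), b) ∈ zpowers x := h ▸ mem_prod.2 ⟨one_mem _, mem_top b⟩
  rw [(Prod.ext hx₁ hx₂ : x = 1), zpowers_one_eq_bot, mem_bot] at hb'
  exact hb (congrArg Prod.snd hb')

theorem Prod.zpowers_eq_top_of_fst_ne_one_of_snd_ne_one {p q : ℕ} [Fact p.Prime] [Fact q.Prime]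
    (hpq : p ≠ q) (hG : Nat.card G = p) (hH : Nat.card H = q) {x : G × H}
    (h₁ : x.1 ≠ 1) (h₂ : x.2 ≠ 1) : zpowers x = ⊤ := by
  have : Finite G := Nat.finite_of_card_ne_zero (hG ▸ NeZero.ne p)
  have : Finite H := Nat.finite_of_card_ne_zero (hH ▸ NeZero.ne q)
  have o₁ : orderOf x.1 = p := orderOf_eq_prime (hG ▸ pow_card_eq_one') h₁
  have o₂ : orderOf x.2 = q := orderOf_eq_prime (hH ▸ pow_card_eq_one') h₂
  rw [← card_eq_iff_eq_top, Nat.card_zpowers, Nat.card_prod, hG, hH, Prod.orderOf, o₁, o₂,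
    ((Nat.coprime_primes Fact.out Fact.out).2 hpq).lcm_eq_mul]

theorem Prod.exists_fst_ne_one_and_snd_ne_one {x₁ x₂ x₃ x₄ : G × H}
    (h₁₂ : (x₁⁻¹ * x₂).1 ≠ 1) (h₁₃ : (x₁⁻¹ * x₃).1 = 1 ∧ (x₁⁻¹ * x₃).2 ≠ 1)
    (h₂₄ : (x₂⁻¹ * x₄).1 = 1 ∧ (x₂⁻¹ * x₄).2 ≠ 1) :
    (x₁.1 ≠ 1 ∧ x₁.2 ≠ 1) ∨ (x₂.1 ≠ 1 ∧ x₂.2 ≠ 1) ∨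
      (x₃.1 ≠ 1 ∧ x₃.2 ≠ 1) ∨ (x₄.1 ≠ 1 ∧ x₄.2 ≠ 1) := by
  simp only [Prod.fst_mul, Prod.snd_mul, Prod.fst_inv, Prod.snd_inv, ne_eq, inv_mul_eq_one]
    at h₁₂ h₁₃ h₂₄
  grind

end

/-- In `Z_p × Z_q` (`p ≠ q` primes), if `π₁⁻¹π₂` generates a subgroup containing `Z_p`,
and `⟨π₁⁻¹π₃⟩ = ⟨π₂⁻¹π₄⟩ = Z_q`, then for every `γ` some `γ·πᵢ` generates the whole group. -/
theorem stmt_11 (p q : ℕ) [Fact p.Prime] [Fact q.Prime] (hpq : p ≠ q)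
    (π₁ π₂ π₃ π₄ : Multiplicative (ZMod p) × Multiplicative (ZMod q))
    (Zp Zq : Subgroup (Multiplicative (ZMod p) × Multiplicative (ZMod q)))
    (hZp : Zp = (⊤ : Subgroup (Multiplicative (ZMod p))).prod
      (⊥ : Subgroup (Multiplicative (ZMod q))))
    (hZq : Zq = (⊥ : Subgroup (Multiplicative (ZMod p))).prod
      (⊤ : Subgroup (Multiplicative (ZMod q))))
    (h12 : Zp ≤ Subgroup.zpowers (π₁⁻¹ * π₂))
    (h13 : Subgroup.zpowers (π₁⁻¹ * π₃) = Zq)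
    (h24 : Subgroup.zpowers (π₂⁻¹ * π₄) = Zq) :
    ∀ γ : Multiplicative (ZMod p) × Multiplicative (ZMod q),
      Subgroup.zpowers (γ * π₁) = ⊤ ∨ Subgroup.zpowers (γ * π₂) = ⊤ ∨
      Subgroup.zpowers (γ * π₃) = ⊤ ∨ Subgroup.zpowers (γ * π₄) = ⊤ := by
  intro γ
  have translate (a b : Multiplicative (ZMod p) × Multiplicative (ZMod q)) :
      (γ * a)⁻¹ * (γ * b) = a⁻¹ * b := by
    simp [mul_assoc]
  have key := Prod.exists_fst_ne_one_and_snd_ne_one (x₁ := γ * π₁) (x₂ := γ * π₂)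
    (x₃ := γ * π₃) (x₄ := γ * π₄)
    (translate π₁ π₂ ▸ Prod.fst_ne_one_of_prod_top_bot_le_zpowers (hZp ▸ h12))
    (translate π₁ π₃ ▸ Prod.fst_eq_one_and_snd_ne_one_of_zpowers_eq_bot_prod_top (h13.trans hZq))
    (translate π₂ π₄ ▸ Prod.fst_eq_one_and_snd_ne_one_of_zpowers_eq_bot_prod_top (h24.trans hZq))
  have generates (x : Multiplicative (ZMod p) × Multiplicative (ZMod q))
      (hx : x.1 ≠ 1 ∧ x.2 ≠ 1) : Subgroup.zpowers x = ⊤ :=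
    Prod.zpowers_eq_top_of_fst_ne_one_of_snd_ne_one hpq (by simp) (by simp) hx.1 hx.2
  exact key.imp (generates _) (.imp (generates _) (.imp (generates _) (generates _)))
end

section
/- Let G be a finite group with normal subgroups Z_p and Z_q of distinct prime orders p and q such that G' = [G,G] = Z_p × Z_q, and let a, b, c ∈ G with [a,b] generating Z_p, [a,c] generating Z_q, and a centralizing G'. Then c centralizes Z_p and b centralizes Z_q. -/
/-!
With `[x,y] = x⁻¹y⁻¹xy`, write `u = [a,b]` and `v = [a,c]`. Since `a` centralizes `G'`, in the
Hall–Witt identity for `(b, a, c)` the factor `[[c,b⁻¹],a]^b` is trivial and, as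
`[b,a⁻¹] = a u a⁻¹ = u`, the factor `[[b,a⁻¹],c]^a` is `[u,c]`. The remaining factor lies in `Z_q`,
because `[a,c⁻¹]` is a conjugate of `v⁻¹`, so `[u,c] ∈ Z_p ∩ Z_q = 1`. Exchanging the roles of
`b` and `c` gives `[v,b] = 1`.
-/

section

variable {G : Type*} [Group G]

/-- `[[b,a⁻¹],c]^a [[a,c⁻¹],b]^c [[c,b⁻¹],a]^b = 1`, with `[x,y] = x⁻¹y⁻¹xy`. -/
theorem hallWitt_identity (a b c : G) :
    a⁻¹ * ((b⁻¹ * a * b * a⁻¹)⁻¹ * c⁻¹ * (b⁻¹ * a * b * a⁻¹) * c) * a *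
      (c⁻¹ * ((a⁻¹ * c * a * c⁻¹)⁻¹ * b⁻¹ * (a⁻¹ * c * a * c⁻¹) * b) * c) *
      (b⁻¹ * ((c⁻¹ * b * c * b⁻¹)⁻¹ * a⁻¹ * (c⁻¹ * b * c * b⁻¹) * a) * b) = 1 := by
  group

theorem inv_mul_inv_mul_mem_commutator (g h : G) : g⁻¹ * h⁻¹ * g * h ∈ commutator G := by
  simpa [commutator_def, commutatorElement_def] using
    Subgroup.commutator_mem_commutator (Subgroup.mem_top g⁻¹) (Subgroup.mem_top h⁻¹)

theorem Subgroup.Normal.inv_mul_inv_mul_mem {N : Subgroup G} (hN : N.Normal) {g : G} (hg : g ∈ N)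
    (h : G) : g⁻¹ * h⁻¹ * g * h ∈ N := by
  simpa only [mul_assoc] using
    N.mul_mem (N.inv_mem hg) (by simpa [mul_assoc] using hN.conj_mem g hg h⁻¹)

theorem commute_of_inv_mul_inv_mul_eq_one {g h : G} (hgh : g⁻¹ * h⁻¹ * g * h = 1) :
    Commute h g := by
  calc h * g = h * g * (g⁻¹ * h⁻¹ * g * h) := by rw [hgh, mul_one]
    _ = g * h := by group

theorem commute_inv_mul_inv_mul_of_disjoint {N M : Subgroup G} (hN : N.Normal) (hM : M.Normal)
    (hNM : Disjoint N M) {a b c : G} (ha : ∀ g ∈ commutator G, Commute a g)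
    (hb : a⁻¹ * b⁻¹ * a * b ∈ N) (hc : a⁻¹ * c⁻¹ * a * c ∈ M) :
    Commute c (a⁻¹ * b⁻¹ * a * b) := by
  set u := a⁻¹ * b⁻¹ * a * b
  have hbab : b⁻¹ * a * b * a⁻¹ = u := by
    rw [← (ha u (inv_mul_inv_mul_mem_commutator a b)).mul_inv_cancel]
    simp only [u]
    group
  have hcac : a⁻¹ * c * a * c⁻¹ ∈ M := by
    simpa [mul_assoc] using hM.conj_mem _ (M.inv_mem hc) c
  have hcb : (c⁻¹ * b * c * b⁻¹)⁻¹ * a⁻¹ * (c⁻¹ * b * c * b⁻¹) * a = 1 := by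
    have hy : c⁻¹ * b * c * b⁻¹ ∈ commutator G := by
      simpa using inv_mul_inv_mul_mem_commutator c b⁻¹
    rw [mul_assoc _ _ a, ← (ha _ hy).eq]
    group
  have huc : a⁻¹ * (u⁻¹ * c⁻¹ * u * c) * a = u⁻¹ * c⁻¹ * u * c :=
    (ha _ (inv_mul_inv_mul_mem_commutator u c)).inv_mul_cancel
  have hW := hallWitt_identity a b c
  rw [hcb, mul_one, inv_mul_cancel, mul_one, hbab, huc, mul_eq_one_iff_eq_inv] at hW
  have hucM : u⁻¹ * c⁻¹ * u * c ∈ M := hW ▸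
    M.inv_mem (by simpa using hM.conj_mem _ (hM.inv_mul_inv_mul_mem hcac b) c⁻¹)
  exact commute_of_inv_mul_inv_mul_eq_one
    (hNM.le_bot ⟨hN.inv_mul_inv_mul_mem hb c, hucM⟩)

end

theorem stmt_14_general {G : Type*} [Group G] (p q : ℕ)
    (hp : p.Prime) (hq : q.Prime) (hpq : p ≠ q)
    (Zp Zq : Subgroup G) (hZpN : Zp.Normal) (hZqN : Zq.Normal)
    (hZp : Nat.card Zp = p) (hZq : Nat.card Zq = q)
    (a b c : G)
    (hab : Subgroup.zpowers (a⁻¹ * b⁻¹ * a * b) = Zp)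
    (hac : Subgroup.zpowers (a⁻¹ * c⁻¹ * a * c) = Zq)
    (haCent : ∀ γ ∈ commutator G, a * γ = γ * a) :
    (∀ x ∈ Zp, c * x = x * c) ∧ (∀ y ∈ Zq, b * y = y * b) := by
  have hdisj : Disjoint Zp Zq := Subgroup.disjoint_of_coprime_natCard <| by
    rw [hZp, hZq]
    exact (Nat.coprime_primes hp hq).2 hpq
  have hb : a⁻¹ * b⁻¹ * a * b ∈ Zp := hab ▸ Subgroup.mem_zpowers _
  have hc : a⁻¹ * c⁻¹ * a * c ∈ Zq := hac ▸ Subgroup.mem_zpowers _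
  have hcu := commute_inv_mul_inv_mul_of_disjoint hZpN hZqN hdisj haCent hb hc
  have hbv := commute_inv_mul_inv_mul_of_disjoint hZqN hZpN hdisj.symm haCent hc hb
  refine ⟨fun x hx => ?_, fun y hy => ?_⟩
  · obtain ⟨n, rfl⟩ := Subgroup.mem_zpowers_iff.mp (hab.symm ▸ hx)
    exact hcu.zpow_right n
  · obtain ⟨n, rfl⟩ := Subgroup.mem_zpowers_iff.mp (hac.symm ▸ hy)
    exact hbv.zpow_right n

/-- Suppose `G' = Z_p × Z_q` with `Z_p, Z_q` normal of distinct prime orders,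
`⟨[a,b]⟩ = Z_p`, `⟨[a,c]⟩ = Z_q`, and `a` centralizes `G'`. Then `c` centralizes
`Z_p` and `b` centralizes `Z_q`. -/
theorem stmt_14 {G : Type*} [Group G] [Finite G] (p q : ℕ)
    (hp : p.Prime) (hq : q.Prime) (hpq : p ≠ q)
    (Zp Zq : Subgroup G) (hZpN : Zp.Normal) (hZqN : Zq.Normal)
    (hZp : Nat.card Zp = p) (hZq : Nat.card Zq = q)
    (hG' : commutator G = Zp ⊔ Zq)
    (a b c : G)
    (hab : Subgroup.zpowers (a⁻¹ * b⁻¹ * a * b) = Zp)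
    (hac : Subgroup.zpowers (a⁻¹ * c⁻¹ * a * c) = Zq)
    (haCent : ∀ γ ∈ commutator G, a * γ = γ * a) :
    (∀ x ∈ Zp, c * x = x * c) ∧ (∀ y ∈ Zq, b * y = y * b) :=
  stmt_14_general p q hp hq hpq Zp Zq hZpN hZqN hZp hZq a b c hab hac haCent
end

section
/- Let G be a finite group of odd order with G' = [G,G] ≅ Z_p × Z_q for distinct primes p, q, and suppose a ∈ G and γ₁, γ₂ ∈ G' are such that ⟨γ₁⟩ = Z_p, ⟨γ₂⟩ = Z_q (identifying the factors). Then γ₁^a·γ₁ generates Z_p, γ₂^a·γ₂ generates Z_q, and (γ₁^a γ₁)(γ₂^a γ₂) generates G'. -/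
/-! Conjugation by `a` inverts `g` exactly when `a⁻¹ g a g = 1`. If that happens, `a²` commutes
with `g`; when `a` has odd order it is a power of `a²`, so `a` itself commutes with `g` and
`g = g⁻¹`, which forces `g = 1` when `g` has odd order. Hence `γ^a γ` is a nontrivial element of
the normal subgroup of prime order generated by `γ`, and generates it. Finally, elements of the two
normal subgroups of coprime orders commute, and the product of commuting elements of coprime
orders generates the join of the cyclic groups they generate. -/

section

open Subgroup

variable {G : Type*} [Group G]

theorem eq_one_of_sq_eq_one_of_odd_orderOf {g : G} (hg : Odd (orderOf g)) (h : g ^ 2 = 1) :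
    g = 1 :=
  orderOf_eq_one_iff.mp <|
    (Nat.coprime_two_right.mpr hg).eq_one_of_dvd (orderOf_dvd_of_pow_eq_one h)

theorem eq_one_of_conj_eq_inv_of_odd_orderOf {a g : G} (ha : Odd (orderOf a))
    (hg : Odd (orderOf g)) (h : a⁻¹ * g * a = g⁻¹) : g = 1 := by
  have hga : g * a = a * g⁻¹ := inv_mul_eq_iff_eq_mul.mp (by rw [← mul_assoc, h])
  have h' : a⁻¹ * g⁻¹ * a = g := by
    rw [← inv_inj, mul_inv_rev, mul_inv_rev, inv_inv, inv_inv, ← mul_assoc, h]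
  have hag : a * g = g⁻¹ * a := (inv_mul_eq_iff_eq_mul.mp (by rw [← mul_assoc, h'])).symm
  have hsq : Commute (a ^ 2) g := by
    calc a ^ 2 * g = a * (a * g) := by rw [sq, mul_assoc]
      _ = a * g⁻¹ * a := by rw [hag, mul_assoc]
      _ = g * a ^ 2 := by rw [← hga, sq, mul_assoc]
  obtain ⟨m, hm⟩ := exists_pow_eq_self_of_coprime (Nat.coprime_two_left.mpr ha)
  have hcomm : Commute a g := hm ▸ hsq.pow_left m
  have hself : g = g⁻¹ := by rw [← h, mul_assoc, ← hcomm.eq, inv_mul_cancel_left]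
  exact eq_one_of_sq_eq_one_of_odd_orderOf hg (by rw [sq, mul_eq_one_iff_eq_inv, ← hself])

theorem Subgroup.zpowers_eq_of_natCard_prime {p : ℕ} (hp : p.Prime) {N : Subgroup G}
    (hN : Nat.card N = p) {x : G} (hx : x ∈ N) (hx1 : x ≠ 1) : zpowers x = N := by
  have : Finite N := Nat.finite_of_card_ne_zero (hN ▸ hp.ne_zero)
  refine eq_of_le_of_card_ge (zpowers_le.mpr hx) ?_
  have hd : orderOf x ∣ p := hN ▸ orderOf_dvd_natCard N hx
  rw [hN, Nat.card_zpowers, (hp.eq_one_or_self_of_dvd _ hd).resolve_left (by simpa using hx1)]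

theorem Subgroup.zpowers_conj_mul_self_of_odd_natCard (hodd : Odd (Nat.card G)) {p : ℕ}
    (hp : p.Prime) {N : Subgroup G} (hNn : N.Normal) (hN : Nat.card N = p) (a : G) {γ : G}
    (hγ : zpowers γ = N) : zpowers (a⁻¹ * γ * a * γ) = N := by
  have hγN : γ ∈ N := hγ ▸ mem_zpowers γ
  have hmem : a⁻¹ * γ * a * γ ∈ N :=
    mul_mem (by simpa using hNn.conj_mem γ hγN a⁻¹) hγN
  have hγ1 : γ ≠ 1 := by
    rintro rfl
    rw [← hγ, zpowers_one_eq_bot, card_bot] at hN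
    exact hp.one_lt.ne hN
  refine zpowers_eq_of_natCard_prime hp hN hmem fun h ↦ hγ1 ?_
  exact eq_one_of_conj_eq_inv_of_odd_orderOf (hodd.of_dvd_nat (_root_.orderOf_dvd_natCard a))
    (hodd.of_dvd_nat (_root_.orderOf_dvd_natCard γ)) (eq_inv_of_mul_eq_one_left h)

theorem Commute.mem_zpowers_mul_of_coprime {x y : G} (h : Commute x y)
    (hco : (orderOf x).Coprime (orderOf y)) : x ∈ zpowers (x * y) := by
  obtain ⟨m, hm⟩ := exists_pow_eq_self_of_coprime (x := x) hco.symm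
  have hpow : (x * y) ^ orderOf y = x ^ orderOf y := by
    rw [h.mul_pow, pow_orderOf_eq_one, mul_one]
  have hx : (x * y) ^ (orderOf y * m) = x := by rw [pow_mul, hpow, hm]
  simpa only [hx] using pow_mem (mem_zpowers (x * y)) (orderOf y * m)

theorem Commute.zpowers_mul_eq_sup_of_coprime {x y : G} (h : Commute x y)
    (hco : (orderOf x).Coprime (orderOf y)) : zpowers (x * y) = zpowers x ⊔ zpowers y := by
  refine le_antisymm (zpowers_le.mpr (mul_mem (mem_sup_left (mem_zpowers x))
    (mem_sup_right (mem_zpowers y)))) (sup_le ?_ ?_) <;> rw [zpowers_le]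
  · exact h.mem_zpowers_mul_of_coprime hco
  · exact h.eq ▸ h.symm.mem_zpowers_mul_of_coprime hco.symm

end

theorem stmt_15_general {G : Type*} [Group G]
    (hodd : Odd (Nat.card G)) (p q : ℕ)
    (hp : p.Prime) (hq : q.Prime) (hpq : p ≠ q)
    (Zp Zq : Subgroup G) (hZpN : Zp.Normal) (hZqN : Zq.Normal)
    (hZp : Nat.card Zp = p) (hZq : Nat.card Zq = q)
    (hG' : commutator G = Zp ⊔ Zq)
    (a γ₁ γ₂ : G)
    (hγ₁ : Subgroup.zpowers γ₁ = Zp) (hγ₂ : Subgroup.zpowers γ₂ = Zq) :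
    Subgroup.zpowers (a⁻¹ * γ₁ * a * γ₁) = Zp ∧
    Subgroup.zpowers (a⁻¹ * γ₂ * a * γ₂) = Zq ∧
    Subgroup.zpowers ((a⁻¹ * γ₁ * a * γ₁) * (a⁻¹ * γ₂ * a * γ₂)) = commutator G := by
  set x := a⁻¹ * γ₁ * a * γ₁
  set y := a⁻¹ * γ₂ * a * γ₂
  have hx : Subgroup.zpowers x = Zp :=
    Subgroup.zpowers_conj_mul_self_of_odd_natCard hodd hp hZpN hZp a hγ₁
  have hy : Subgroup.zpowers y = Zq :=
    Subgroup.zpowers_conj_mul_self_of_odd_natCard hodd hq hZqN hZq a hγ₂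
  have hpq' : p.Coprime q := (Nat.coprime_primes hp hq).mpr hpq
  have hco : (orderOf x).Coprime (orderOf y) := by
    rwa [← Nat.card_zpowers, ← Nat.card_zpowers, hx, hy, hZp, hZq]
  have hcomm : Commute x y :=
    Subgroup.commute_of_normal_of_disjoint Zp Zq hZpN hZqN
      (Subgroup.disjoint_of_coprime_natCard (by rwa [hZp, hZq])) x y
      (hx ▸ Subgroup.mem_zpowers x) (hy ▸ Subgroup.mem_zpowers y)
  exact ⟨hx, hy, by rw [hcomm.zpowers_mul_eq_sup_of_coprime hco, hx, hy, hG']⟩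

/-- If `|G|` is odd, `G' = Z_p × Z_q` with `Z_p, Z_q` normal of distinct prime orders,
`⟨γ₁⟩ = Z_p` and `⟨γ₂⟩ = Z_q`, then `γ₁^a·γ₁` generates `Z_p`, `γ₂^a·γ₂` generates `Z_q`,
and their product generates `G'`. -/
theorem stmt_15 {G : Type*} [Group G] [Finite G]
    (hodd : Odd (Nat.card G)) (p q : ℕ)
    (hp : p.Prime) (hq : q.Prime) (hpq : p ≠ q)
    (Zp Zq : Subgroup G) (hZpN : Zp.Normal) (hZqN : Zq.Normal)
    (hZp : Nat.card Zp = p) (hZq : Nat.card Zq = q)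
    (hG' : commutator G = Zp ⊔ Zq)
    (a γ₁ γ₂ : G)
    (hγ₁ : Subgroup.zpowers γ₁ = Zp) (hγ₂ : Subgroup.zpowers γ₂ = Zq) :
    Subgroup.zpowers (a⁻¹ * γ₁ * a * γ₁) = Zp ∧
    Subgroup.zpowers (a⁻¹ * γ₂ * a * γ₂) = Zq ∧
    Subgroup.zpowers ((a⁻¹ * γ₁ * a * γ₁) * (a⁻¹ * γ₂ * a * γ₂)) = commutator G :=
  stmt_15_general hodd p q hp hq hpq Zp Zq hZpN hZqN hZp hZq hG' a γ₁ γ₂ hγ₁ hγ₂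
end

section
/- Let G = Z_{p^μ} ⋊ (Z₃ × Z₃) = ⟨x⟩ ⋊ (⟨a⟩ × ⟨b₀⟩) with p > 3 prime, where x^a = x^{r²} and x^{b₀} = x^r for r a primitive cube root of unity modulo p^μ, and set b = x b₀. Then the element ab has order 3p^μ. -/
/-! Conjugation by `a` and then by `b₀` raises `x` to the power `r² · r = r³ ≡ 1`, so `t = a b₀`
centralizes `x`, and `ab = t · (b₀⁻¹ x b₀)` is a product of commuting elements of the coprime
orders `3` and `p^μ`. That `t ≠ 1` is forced by the order of `G`: if `b₀ = a⁻¹`, then `⟨x⟩` is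
normalized by `a` and `G = ⟨a⟩⟨x⟩` would have at most `3 p^μ` elements. -/

open Subgroup

section

variable {G : Type*} [Group G]

theorem Subgroup.card_sup_le_of_le_normalizer {H N : Subgroup G}
    (hH : H ≤ normalizer (N : Set G)) :
    Nat.card ↥(H ⊔ N) ≤ Nat.card H * Nat.card N := by
  have := Set.natCard_mul_le (s := (H : Set G)) (t := (N : Set G))
  rwa [← coe_mul_of_left_le_normalizer_right H N hH] at this

theorem orderOf_conj (g x : G) : orderOf (g * x * g⁻¹) = orderOf x :=
  orderOf_injective (MulAut.conj g).toMonoidHom (MulEquiv.injective _) x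

theorem mem_normalizer_zpowers_of_conj_eq_pow {g x : G} {n : ℕ} (hx : IsOfFinOrder x)
    (hconj : g⁻¹ * x * g = x ^ n) : g ∈ normalizer (zpowers x : Set G) := by
  have : Finite (zpowers x : Set G) := hx.finite_zpowers
  refine inv_mem_iff.mp (mem_normalizer_fintype fun y hy => ?_)
  obtain ⟨k, rfl⟩ := mem_zpowers_iff.mp hy
  have : g⁻¹ * x ^ k * g = x ^ ((n : ℤ) * k) := by
    simpa [hconj, zpow_mul] using (conj_zpow (a := g⁻¹) (b := x) (i := k)).symm
  rw [inv_inv, this]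
  exact zpow_mem_zpowers x _

theorem card_le_orderOf_mul_orderOf [Finite G] {a x : G} {n : ℕ}
    (hconj : a⁻¹ * x * a = x ^ n) (htop : zpowers a ⊔ zpowers x = ⊤) :
    Nat.card G ≤ orderOf a * orderOf x := by
  have hnorm : zpowers a ≤ normalizer (zpowers x : Set G) :=
    zpowers_le.mpr (mem_normalizer_zpowers_of_conj_eq_pow (isOfFinOrder_of_finite x) hconj)
  calc Nat.card G = Nat.card ↥(zpowers a ⊔ zpowers x) := by rw [htop, card_top]
    _ ≤ Nat.card (zpowers a) * Nat.card (zpowers x) := card_sup_le_of_le_normalizer hnorm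
    _ = orderOf a * orderOf x := by rw [Nat.card_zpowers, Nat.card_zpowers]

theorem commute_mul_of_conj_eq_pow {a b x : G} {m n : ℕ} (ha : a⁻¹ * x * a = x ^ m)
    (hb : b⁻¹ * x * b = x ^ n) (hmn : x ^ (n * m) = x) : Commute (a * b) x := by
  have hconj : (a * b)⁻¹ * x * (a * b) = x := by
    calc (a * b)⁻¹ * x * (a * b) = b⁻¹ * (a⁻¹ * x * a) * b := by group
      _ = (b⁻¹ * x * b) ^ m := by simpa [ha] using (conj_pow (a := b⁻¹) (b := x) (i := m)).symm
      _ = x := by rw [hb, ← pow_mul, hmn]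
  rw [commute_iff_eq]
  nth_rw 1 [← hconj]
  group

end

theorem stmt_17_general {G : Type*} [Group G] (p μ r : ℕ) (hp : p.Prime) (hp3 : 3 < p)
    (x a b₀ : G)
    (hx : orderOf x = p ^ μ) (ha : orderOf a = 3) (hb₀ : orderOf b₀ = 3)
    (hab₀ : a * b₀ = b₀ * a)
    (hr3 : r ^ 3 ≡ 1 [MOD p ^ μ])
    (hxa : a⁻¹ * x * a = x ^ (r ^ 2)) (hxb : b₀⁻¹ * x * b₀ = x ^ r)
    (hcard : Nat.card G = 9 * p ^ μ)
    (hgen : Subgroup.closure ({x, a, b₀} : Set G) = ⊤) :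
    orderOf (a * (x * b₀)) = 3 * p ^ μ := by
  have : Finite G := Nat.finite_of_card_ne_zero (by rw [hcard]; positivity)
  have hxr3 : x ^ (r * r ^ 2) = x := by
    rw [← pow_succ', ← pow_one x, ← pow_mul, one_mul, pow_eq_pow_iff_modEq, hx]
    exact hr3
  have hcomm : Commute (a * b₀) x := commute_mul_of_conj_eq_pow hxa hxb hxr3
  have hne : a * b₀ ≠ 1 := by
    intro h
    have hb₀a : b₀ = a⁻¹ := eq_inv_of_mul_eq_one_right h
    have htop : zpowers a ⊔ zpowers x = ⊤ := by
      refine top_le_iff.mp (hgen ▸ (closure_le _).mpr ?_)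
      rintro g (rfl | rfl | rfl)
      · exact mem_sup_right (mem_zpowers g)
      · exact mem_sup_left (mem_zpowers g)
      · exact mem_sup_left (hb₀a ▸ inv_mem (mem_zpowers a))
    have := card_le_orderOf_mul_orderOf hxa htop
    rw [hcard, ha, hx] at this
    have hpμ : 0 < p ^ μ := pow_pos hp.pos μ
    omega
  have ht : orderOf (a * b₀) = 3 := by
    refine orderOf_eq_prime ?_ hne
    rw [Commute.mul_pow hab₀, ← ha, pow_orderOf_eq_one, ha, ← hb₀, pow_orderOf_eq_one, one_mul]
  have hy : orderOf (b₀⁻¹ * x * b₀) = p ^ μ := by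
    simpa only [inv_inv, hx] using orderOf_conj b₀⁻¹ x
  have hcop : Nat.Coprime 3 (p ^ μ) :=
    ((Nat.coprime_primes Nat.prime_three hp).mpr hp3.ne).pow_right μ
  have hcomm' : Commute (a * b₀) (b₀⁻¹ * x * b₀) := hxb ▸ hcomm.pow_right r
  calc orderOf (a * (x * b₀)) = orderOf (a * b₀ * (b₀⁻¹ * x * b₀)) := by group
    _ = 3 * p ^ μ := by
      rw [hcomm'.orderOf_mul_eq_mul_orderOf_of_coprime (by rwa [ht, hy]), ht, hy]

/-- In `G = Z_{p^μ} ⋊ (Z₃ × Z₃) = ⟨x⟩ ⋊ (⟨a⟩ × ⟨b₀⟩)` with `p > 3` prime,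
`x^a = x^{r²}`, `x^{b₀} = x^r` for `r` a primitive cube root of unity mod `p^μ`,
and `b = x b₀`, the element `ab` has order `3 p^μ`. -/
theorem stmt_17 {G : Type*} [Group G] (p μ r : ℕ) (hp : p.Prime) (hp3 : 3 < p)
    (x a b₀ : G)
    (hx : orderOf x = p ^ μ) (ha : orderOf a = 3) (hb₀ : orderOf b₀ = 3)
    (hab₀ : a * b₀ = b₀ * a)
    (hr3 : r ^ 3 ≡ 1 [MOD p ^ μ]) (hr1 : ¬ r ≡ 1 [MOD p])
    (hxa : a⁻¹ * x * a = x ^ (r ^ 2)) (hxb : b₀⁻¹ * x * b₀ = x ^ r)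
    (hcard : Nat.card G = 9 * p ^ μ)
    (hgen : Subgroup.closure ({x, a, b₀} : Set G) = ⊤) :
    orderOf (a * (x * b₀)) = 3 * p ^ μ :=
  stmt_17_general p μ r hp hp3 x a b₀ hx ha hb₀ hab₀ hr3 hxa hxb hcard hgen
end
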